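/- arXiv:1504.04065 — 3 statements merged into one kernel-verified Lean document; each statement's English description precedes it below -/
import Mathlib

section
/- In any alternative ring, any subring generated by two elements is associative (Artin's theorem); equivalently, for all a, b in the ring, every product formed from a and b is independent of the placement of parentheses. -/
/-!
In an alternative ring the associator `[x, y, z]` is alternating, and summing instances of
Teichmüller's identity shows that Kleinfeld's function
`f(w, x, y, z) = [wx, y, z] - x[w, y, z] - [x, y, z]w` is skew-symmetric as well.

Evaluate nonempty words in the two generators as right-normed products and induct on the total
length of three words. Once all associators of shorter words vanish, `[pq, r, s] = f(p, q, r, s)`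
depends only on the word `pq` and is skew-symmetric in `p, q, r, s`. Two of `q, r, s` begin with
the same letter `c`; shifting that letter between the words by these symmetries reduces
`[pq, r, s]` to an associator `[u, c, c]`, which vanishes.
-/

class IsAlternative (A : Type*) [Mul A] : Prop where
  mul_self_mul (a b : A) : a * a * b = a * (a * b)
  mul_mul_self (a b : A) : a * b * b = a * (b * b)

section Alternative

variable {A : Type*} [NonUnitalNonAssocRing A] [IsAlternative A]

theorem associator_self_left (x y : A) : associator x x y = 0 :=
  sub_eq_zero.2 (IsAlternative.mul_self_mul x y)

theorem associator_self_right (x y : A) : associator x y y = 0 :=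
  sub_eq_zero.2 (IsAlternative.mul_mul_self x y)

theorem associator_swap_left (x y z : A) : associator y x z = -associator x y z := by
  have h := associator_self_left (x + y) z
  simp only [← AddMonoidHom.associator_apply, map_add, AddMonoidHom.add_apply] at h
  simp only [AddMonoidHom.associator_apply, associator_self_left, zero_add, add_zero] at h
  exact eq_neg_of_add_eq_zero_left h

theorem associator_swap_right (x y z : A) : associator x z y = -associator x y z := by
  have h := associator_self_right x (y + z)
  simp only [← AddMonoidHom.associator_apply, map_add, AddMonoidHom.add_apply] at h
  simp only [AddMonoidHom.associator_apply, associator_self_right, zero_add, add_zero] at h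
  exact eq_neg_of_add_eq_zero_left h

theorem associator_rotate (x y z : A) : associator y z x = associator x y z := by
  rw [associator_swap_right, associator_swap_left, neg_neg]

def kleinfeld (w x y z : A) : A :=
  associator (w * x) y z - x * associator w y z - associator x y z * w

theorem kleinfeld_swap_mid (w x y z : A) : kleinfeld w y x z = -kleinfeld w x y z := by
  have h₁ := associator_cocycle w x y z
  have h₂ := associator_cocycle w y x z
  have h₃ := associator_cocycle x y z w
  have h₄ := associator_cocycle y x z w
  rw [← associator_rotate w (x * y) z, ← associator_rotate w x (y * z)] at h₁
  rw [← associator_rotate w (y * x) z, ← associator_rotate w y (x * z), associator_swap_left x y z,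
    associator_swap_right w x y] at h₂
  rw [associator_rotate w y z] at h₃
  rw [associator_rotate w x z, associator_swap_left x y z, associator_swap_left x y (z * w)] at h₄
  unfold kleinfeld
  rw [associator_swap_left x y z]
  simp only [mul_neg, neg_mul] at *
  linear_combination (norm := abel1) -(h₁ + h₂ + h₃ + h₄)

theorem kleinfeld_swap_left (w x y z : A) : kleinfeld x w y z = -kleinfeld w x y z := by
  have h₁ := associator_cocycle y x w z
  have h₂ := associator_cocycle w z y x
  have h₃ := associator_cocycle x z y w
  have h₄ := associator_cocycle y w x z
  rw [associator_swap_left w x z, associator_swap_left (x * w) y z,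
    associator_swap_right y w x] at h₁
  rw [associator_rotate x (w * z) y, associator_rotate y x (w * z), associator_swap_left y z x,
    associator_rotate x y z, associator_swap_left (z * y) w x, associator_rotate x (z * y) w,
    associator_rotate (y * x) w z, associator_swap_right w y z] at h₂
  rw [associator_swap_left y z w, associator_rotate w y z, associator_rotate (y * w) x z,
    associator_swap_right x y z] at h₃
  rw [associator_rotate (x * z) y w, associator_swap_left (w * x) y z] at h₄
  unfold kleinfeld
  simp only [mul_neg, neg_mul] at *
  linear_combination (norm := abel1) -h₁ + h₂ + h₃ - h₄

theorem associator_flexible (x y : A) : associator x y x = 0 := by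
  rw [← associator_rotate, associator_self_right]

theorem associator_eq_zero_of_bool (g : Bool → A) (i j k : Bool) :
    associator (g i) (g j) (g k) = 0 := by
  cases i <;> cases j <;> cases k <;>
    simp only [associator_self_left, associator_self_right, associator_flexible]

end Alternative

theorem associator_eq_zero_of_mem_addSubgroupClosure {A : Type*} [NonUnitalNonAssocRing A]
    {s : Set A} (hs : ∀ x ∈ s, ∀ y ∈ s, ∀ z ∈ s, associator x y z = 0) {x y z : A}
    (hx : x ∈ AddSubgroup.closure s) (hy : y ∈ AddSubgroup.closure s)
    (hz : z ∈ AddSubgroup.closure s) : associator x y z = 0 := by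
  have vanish : ∀ f : A →+ A, (∀ t ∈ s, f t = 0) → ∀ t ∈ AddSubgroup.closure s, f t = 0 :=
    fun f hf t ht => (AddSubgroup.closure_le f.ker).2 hf ht
  refine vanish (AddMonoidHom.associator x y) (fun z hz => ?_) z hz
  refine vanish ((AddMonoidHom.associator x).flip z) (fun y hy => ?_) y hy
  exact vanish ((AddMonoidHom.associator.flip y).flip z) (fun x hx => hs x hx y hy z hz) x hx

namespace FreeSemigroup

variable {α A : Type*}

def rightNormedProd [Mul A] (g : α → A) (w : FreeSemigroup α) : A :=
  FreeSemigroup.recOnMul w g fun x _ _ p => g x * p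

theorem rightNormedProd_of_mul [Mul A] (g : α → A) (x : α) (w : FreeSemigroup α) :
    rightNormedProd g (of x * w) = g x * rightNormedProd g w := rfl

theorem length_pos (w : FreeSemigroup α) : 0 < w.length := Nat.succ_pos _

variable [NonUnitalNonAssocRing A] (g : α → A)

def wordAssociator (u v w : FreeSemigroup α) : A :=
  associator (rightNormedProd g u) (rightNormedProd g v) (rightNormedProd g w)

def AssociatorVanishesBelow (n : ℕ) : Prop :=
  ∀ u v w : FreeSemigroup α, u.length + v.length + w.length < n → wordAssociator g u v w = 0

section Alternative

variable [IsAlternative A]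

theorem wordAssociator_swap_left (u v w : FreeSemigroup α) :
    wordAssociator g v u w = -wordAssociator g u v w :=
  associator_swap_left _ _ _

theorem wordAssociator_swap_right (u v w : FreeSemigroup α) :
    wordAssociator g u w v = -wordAssociator g u v w :=
  associator_swap_right _ _ _

end Alternative

section Induction

variable {g} {n : ℕ} (h : AssociatorVanishesBelow g n)
include h

theorem rightNormedProd_mul_of_length_lt {u v : FreeSemigroup α}
    (huv : u.length + v.length < n) :
    rightNormedProd g (u * v) = rightNormedProd g u * rightNormedProd g v := by
  induction u with
  | ih1 x => rfl
  | ih2 x u _ ih =>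
    have hxuv : associator (g x) (rightNormedProd g u) (rightNormedProd g v) = 0 :=
      h (of x) u v (by simpa only [length_mul] using huv)
    simp only [length_mul, length_of] at huv
    rw [mul_assoc, rightNormedProd_of_mul, ih (by omega), rightNormedProd_of_mul,
      ← sub_eq_zero.1 hxuv]

section

variable {p q r s : FreeSemigroup α} (hlen : p.length + q.length + r.length + s.length ≤ n)
include hlen

theorem kleinfeld_rightNormedProd :
    kleinfeld (rightNormedProd g p) (rightNormedProd g q) (rightNormedProd g r)
      (rightNormedProd g s) = wordAssociator g (p * q) r s := by
  have := p.length_pos; have := q.length_pos; have := r.length_pos; have := s.length_pos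
  have hprs : wordAssociator g p r s = 0 := h p r s (by omega)
  have hqrs : wordAssociator g q r s = 0 := h q r s (by omega)
  rw [wordAssociator] at hprs hqrs ⊢
  rw [kleinfeld, hprs, hqrs, mul_zero, zero_mul, sub_zero, sub_zero,
    rightNormedProd_mul_of_length_lt h (by omega)]

variable [IsAlternative A]

theorem wordAssociator_mul_swap_left :
    wordAssociator g (q * p) r s = -wordAssociator g (p * q) r s := by
  rw [← kleinfeld_rightNormedProd h hlen, ← kleinfeld_rightNormedProd h (by omega),
    kleinfeld_swap_left]

theorem wordAssociator_mul_swap_mid :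
    wordAssociator g (p * r) q s = -wordAssociator g (p * q) r s := by
  rw [← kleinfeld_rightNormedProd h hlen, ← kleinfeld_rightNormedProd h (by omega),
    kleinfeld_swap_mid]

end

variable [IsAlternative A]

theorem wordAssociator_mul_mul_rotate {p x y r s : FreeSemigroup α}
    (hlen : p.length + x.length + y.length + r.length + s.length ≤ n) :
    wordAssociator g (p * (x * y)) r s = -wordAssociator g (y * p * x) r s := by
  rw [← mul_assoc, wordAssociator_mul_swap_left h (p := y) (q := p * x)
    (by simp only [length_mul]; omega), mul_assoc]

theorem wordAssociator_mul_of_eq_zero_of_head_eq {p r s : FreeSemigroup α} {c : α}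
    (hlen : p.length + r.length + s.length < n) (hs : s.head = c) :
    wordAssociator g (p * of c) r s = 0 := by
  have base : ∀ p' : FreeSemigroup α, p'.length + r.length + 1 < n →
      wordAssociator g (p' * of c) r (of c) = 0 := fun p' hp' => by
    rw [← neg_eq_zero, ← wordAssociator_mul_swap_mid h (by simp only [length_of]; omega)]
    exact associator_self_right _ _
  induction s with
  | ih1 d =>
    obtain rfl : d = c := hs
    exact base p (by simpa only [length_of] using hlen)
  | ih2 d s _ _ =>
    obtain rfl : d = c := hs
    simp only [length_mul, length_of] at hlen
    calc wordAssociator g (p * of d) r (of d * s)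
        = -wordAssociator g (p * of d) (of d * s) r := wordAssociator_swap_right g _ _ _
      _ = wordAssociator g (p * (of d * s)) (of d) r := by
        rw [wordAssociator_mul_swap_mid h (q := of d) (r := of d * s)
          (by simp only [length_mul, length_of]; omega)]
      _ = -wordAssociator g (s * p * of d) (of d) r :=
        wordAssociator_mul_mul_rotate h (by simp only [length_of]; omega)
      _ = wordAssociator g (s * p * of d) r (of d) := by rw [wordAssociator_swap_right, neg_neg]
      _ = 0 := base _ (by simp only [length_mul]; omega)

theorem wordAssociator_mul_eq_zero_of_head_eq {p q r s : FreeSemigroup α}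
    (hlen : p.length + q.length + r.length + s.length ≤ n) (hqs : q.head = s.head) :
    wordAssociator g (p * q) r s = 0 := by
  have := s.length_pos
  induction q with
  | ih1 c =>
    simp only [length_of] at hlen
    exact wordAssociator_mul_of_eq_zero_of_head_eq h (by omega) hqs.symm
  | ih2 c q _ _ =>
    simp only [length_mul, length_of] at hlen
    rw [wordAssociator_mul_mul_rotate h (by simp only [length_of]; omega), neg_eq_zero]
    exact wordAssociator_mul_of_eq_zero_of_head_eq h (by simp only [length_mul]; omega) hqs.symm

end Induction

section Bool

variable {g : Bool → A} {n : ℕ} [IsAlternative A]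

theorem wordAssociator_mul_eq_zero (h : AssociatorVanishesBelow g n)
    {p q r s : FreeSemigroup Bool} (hlen : p.length + q.length + r.length + s.length ≤ n) :
    wordAssociator g (p * q) r s = 0 := by
  rcases (by decide : ∀ i j k : Bool, i = k ∨ i = j ∨ j = k) q.head r.head s.head
    with hqs | hqr | hrs
  · exact wordAssociator_mul_eq_zero_of_head_eq h hlen hqs
  · rw [← neg_eq_zero, ← wordAssociator_swap_right]
    exact wordAssociator_mul_eq_zero_of_head_eq h (by omega) hqr
  · rw [← neg_eq_zero, ← wordAssociator_mul_swap_mid h hlen]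
    exact wordAssociator_mul_eq_zero_of_head_eq h (by omega) hrs

theorem associatorVanishesBelow_succ (h : AssociatorVanishesBelow g n) :
    AssociatorVanishesBelow g (n + 1) := by
  intro u v w huvw
  rcases Nat.lt_succ_iff_lt_or_eq.1 huvw with hlt | hn
  · exact h u v w hlt
  induction u with
  | ih2 a u _ _ => exact wordAssociator_mul_eq_zero h (by simp only [length_mul] at hn; omega)
  | ih1 a =>
  induction v with
  | ih2 b v _ _ =>
    rw [wordAssociator_swap_left, neg_eq_zero]
    exact wordAssociator_mul_eq_zero h (by simp only [length_mul] at hn; omega)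
  | ih1 b =>
  induction w with
  | ih2 c w _ _ =>
    rw [wordAssociator_swap_right, wordAssociator_swap_left, neg_neg]
    exact wordAssociator_mul_eq_zero h (by simp only [length_mul] at hn; omega)
  | ih1 c => exact associator_eq_zero_of_bool g a b c

variable (g)

theorem associatorVanishesBelow (n : ℕ) : AssociatorVanishesBelow g n := by
  induction n with
  | zero => exact fun _ _ _ h => absurd h (Nat.not_lt_zero _)
  | succ n ih => exact associatorVanishesBelow_succ ih

theorem wordAssociator_eq_zero (u v w : FreeSemigroup Bool) : wordAssociator g u v w = 0 :=
  associatorVanishesBelow g _ u v w (Nat.lt_succ_self _)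

def rightNormedProdHom : FreeSemigroup Bool →ₙ* A where
  toFun := rightNormedProd g
  map_mul' _ _ :=
    rightNormedProd_mul_of_length_lt (associatorVanishesBelow g _) (Nat.lt_succ_self _)

end Bool

end FreeSemigroup

theorem associator_eq_zero_of_mem_closure {A : Type*} [NonUnitalNonAssocRing A]
    {S : Subsemigroup A} (hS : ∀ x ∈ S, ∀ y ∈ S, ∀ z ∈ S, associator x y z = 0)
    {s : Set A} (hs : s ⊆ S) {x y z : A}
    (hx : x ∈ NonUnitalSubring.closure s) (hy : y ∈ NonUnitalSubring.closure s)
    (hz : z ∈ NonUnitalSubring.closure s) : associator x y z = 0 := by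
  have mem : ∀ {t}, t ∈ NonUnitalSubring.closure s → t ∈ AddSubgroup.closure (S : Set A) :=
    fun ht => AddSubgroup.closure_mono (Subsemigroup.closure_le.2 hs)
      (NonUnitalSubring.mem_closure_iff.1 ht)
  exact associator_eq_zero_of_mem_addSubgroupClosure hS (mem hx) (mem hy) (mem hz)

/-- Artin's theorem: in an alternative ring, the subring generated by any two
elements is associative. -/
theorem artin_two_generated_subring_associative {A : Type*} [NonUnitalNonAssocRing A]
    (alt_left : ∀ a b : A, (a * a) * b = a * (a * b))
    (alt_right : ∀ a b : A, (a * b) * b = a * (b * b)) (a b : A) :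
    ∀ x ∈ NonUnitalSubring.closure ({a, b} : Set A),
      ∀ y ∈ NonUnitalSubring.closure ({a, b} : Set A),
        ∀ z ∈ NonUnitalSubring.closure ({a, b} : Set A),
          (x * y) * z = x * (y * z) := by
  have : IsAlternative A := ⟨alt_left, alt_right⟩
  intro x hx y hy z hz
  refine sub_eq_zero.1 (associator_eq_zero_of_mem_closure
    (S := (FreeSemigroup.rightNormedProdHom fun i => cond i a b).srange) ?_ ?_ hx hy hz)
  · rintro _ ⟨u, rfl⟩ _ ⟨v, rfl⟩ _ ⟨w, rfl⟩
    exact FreeSemigroup.wordAssociator_eq_zero _ u v w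
  · rintro _ (rfl | rfl)
    exacts [⟨.of true, rfl⟩, ⟨.of false, rfl⟩]
end

section
/- In any alternative ring, the middle Moufang identity holds: (zx)(yz) = (z(xy))z for all x, y, z. -/
/-!
Write `(a, b, c)` for the associator. Alternativity makes it an alternating function, and
specialising Teichmüller's identity `associator_cocycle` to arguments with a repeated entry gives
`(zx, y, z) = (x, y, z) z`. Since `(zx)(yz) - (z(xy))z = (z, x, y) z - (zx, y, z)`, the middle
Moufang identity follows.
-/

def LeftAlternative (A : Type*) [Mul A] : Prop := ∀ a b : A, a * a * b = a * (a * b)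

def RightAlternative (A : Type*) [Mul A] : Prop := ∀ a b : A, a * b * b = a * (b * b)

section Associator

variable {A : Type*} [NonUnitalNonAssocRing A]

theorem LeftAlternative.associator_self_left (hl : LeftAlternative A) (a b : A) :
    associator a a b = 0 :=
  sub_eq_zero.2 (hl a b)

theorem RightAlternative.associator_self_right (hr : RightAlternative A) (a b : A) :
    associator a b b = 0 :=
  sub_eq_zero.2 (hr a b)

theorem LeftAlternative.associator_swap_left (hl : LeftAlternative A) (a b c : A) :
    associator b a c = -associator a b c := by
  have h := hl.associator_self_left (a + b) c
  simp only [← AddMonoidHom.associator_apply, map_add, AddMonoidHom.add_apply] at h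
  simp only [AddMonoidHom.associator_apply, hl.associator_self_left, zero_add, add_zero] at h
  exact eq_neg_of_add_eq_zero_left h

theorem RightAlternative.associator_swap_right (hr : RightAlternative A) (a b c : A) :
    associator a c b = -associator a b c := by
  have h := hr.associator_self_right a (b + c)
  simp only [← AddMonoidHom.associator_apply, map_add, AddMonoidHom.add_apply] at h
  simp only [AddMonoidHom.associator_apply, hr.associator_self_right, zero_add, add_zero] at h
  exact eq_neg_of_add_eq_zero_left h

theorem associator_cyclic (hl : LeftAlternative A) (hr : RightAlternative A) (a b c : A) :
    associator b c a = associator a b c := by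
  rw [hl.associator_swap_left, hr.associator_swap_right, hl.associator_swap_left,
    hr.associator_swap_right, neg_neg, neg_neg]

theorem LeftAlternative.associator_mul_self_left (hl : LeftAlternative A) (a b c : A) :
    associator (a * a) b c = a * associator a b c + associator a (a * b) c := by
  have h := associator_cocycle a a b c
  rw [hl.associator_self_left, hl.associator_self_left, zero_mul] at h
  linear_combination (norm := abel1) -h

theorem associator_mul_self_mid (hl : LeftAlternative A) (hr : RightAlternative A) (a b c : A) :
    associator a (b * b) c = associator (a * b) b c + associator a b (b * c) := by
  have h := associator_cocycle a b b c
  rw [hl.associator_self_left, hr.associator_self_right, mul_zero, zero_mul] at h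
  linear_combination (norm := abel1) h

theorem RightAlternative.associator_mul_self_right (hr : RightAlternative A) (a b c : A) :
    associator a b (c * c) = associator a b c * c + associator a (b * c) c := by
  have h := associator_cocycle a b c c
  rw [hr.associator_self_right, hr.associator_self_right, mul_zero] at h
  linear_combination (norm := abel1) -h

theorem associator_mul_left_swap (hl : LeftAlternative A) (hr : RightAlternative A) (a b c : A) :
    associator a (a * b) c = -associator a (a * c) b := by
  have h := congrArg₂ (· + ·) (hl.associator_mul_self_left a b c)
    (hl.associator_mul_self_left a c b)
  simp only [fun d => hr.associator_swap_right d b c, mul_neg] at h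
  linear_combination (norm := abel1) -h

theorem associator_mul_left_self (hl : LeftAlternative A) (hr : RightAlternative A) (x y z : A) :
    associator (z * x) y z = associator x y z * z := by
  calc associator (z * x) y z
      = associator z (z * x) y := associator_cyclic hl hr _ _ _
    _ = -associator z (z * y) x := associator_mul_left_swap hl hr z x y
    _ = -associator x z (z * y) := by rw [associator_cyclic hl hr]
    _ = associator (x * z) z y - associator x (z * z) y := by
        rw [associator_mul_self_mid hl hr]; abel
    _ = associator y (x * z) z - associator y x (z * z) := by
        rw [associator_cyclic hl hr y, associator_cyclic hl hr y]
    _ = -(associator y x z * z) := by rw [hr.associator_mul_self_right]; abel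
    _ = associator x y z * z := by rw [hl.associator_swap_left, neg_mul, neg_neg]

end Associator

/-- Middle Moufang identity in an alternative ring. -/
theorem middle_moufang {A : Type*} [NonUnitalNonAssocRing A]
    (alt_left : ∀ a b : A, (a * a) * b = a * (a * b))
    (alt_right : ∀ a b : A, (a * b) * b = a * (b * b)) :
    ∀ x y z : A, (z * x) * (y * z) = (z * (x * y)) * z := by
  intro x y z
  have h := associator_mul_left_self alt_left alt_right x y z
  rw [associator_cyclic alt_left alt_right z x y] at h
  simp only [associator_apply, sub_mul] at h
  linear_combination (norm := abel1) -h
end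

section
/- For any 2×2 matrix M with entries in the quaternions, and any 2×2 Hermitian quaternionic matrix X, det(M X M†) = det(M M†) · det(X), where for a Hermitian matrix ((α, x),(x̄, β)) with α, β real the determinant is α β − ‖x‖², and det(M M†) = ‖a‖²‖d‖² + ‖b‖²‖c‖² − 2 Re(a c̄ d b̄) for M = ((a,b),(c,d)). -/
open Matrix

/-- The determinant of a `2 × 2` Hermitian quaternionic matrix:
product of the (real) diagonal entries minus the squared norm of the
off-diagonal entry. -/
def hdet (X : Matrix (Fin 2) (Fin 2) (Quaternion ℝ)) : ℝ :=
  (X 0 0).re * (X 1 1).re - Quaternion.normSq (X 0 1)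

/-!
A Hermitian `X` has the shape `!![α, x; star x, β]` with `α β` real. The formula for
`hdet (M * Mᴴ)` follows from `normSq (p + q) = normSq p + normSq q + 2 (p q̄).re` and the
multiplicativity of `normSq`, since `(a c̄) (b d̄)‾ = a c̄ d b̄`. Once `X` is in that shape,
`hdet (M X Mᴴ) = hdet (M Mᴴ) hdet X` is a polynomial identity in `α`, `β` and the real
coordinates of `x` and of the entries of `M`.
-/

open Quaternion

theorem Matrix.IsHermitian.eq_fin_two {R : Type*} [CommRing R] [NoZeroDivisors R] [CharZero R]
    {X : Matrix (Fin 2) (Fin 2) ℍ[R]} (hX : X.IsHermitian) :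
    X = !![((X 0 0).re : ℍ[R]), X 0 1; star (X 0 1), ((X 1 1).re : ℍ[R])] := by
  have h : ∀ i j, star (X j i) = X i j := fun i j => congrFun (congrFun hX i) j
  refine Matrix.ext fun i j => ?_
  fin_cases i <;> fin_cases j
  · exact star_eq_self.mp (h 0 0)
  · rfl
  · exact (h 1 0).symm
  · exact star_eq_self.mp (h 1 1)

theorem hdet_fin_two (α β : ℝ) (x : ℍ[ℝ]) :
    hdet !![(α : ℍ[ℝ]), x; star x, (β : ℍ[ℝ])] = α * β - normSq x := by
  simp [hdet]

theorem hdet_mul_conjTranspose (M : Matrix (Fin 2) (Fin 2) ℍ[ℝ]) :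
    hdet (M * Mᴴ) = normSq (M 0 0) * normSq (M 1 1) + normSq (M 0 1) * normSq (M 1 0) -
      2 * (M 0 0 * star (M 1 0) * M 1 1 * star (M 0 1)).re := by
  simp only [hdet, mul_apply, Fin.sum_univ_two, conjTranspose_apply, self_mul_star, ← coe_add,
    re_coe, normSq_add, map_mul, normSq_star, star_mul, star_star, ← mul_assoc]
  ring

theorem hdet_mul_fin_two_mul_conjTranspose (M : Matrix (Fin 2) (Fin 2) ℍ[ℝ]) (α β : ℝ)
    (x : ℍ[ℝ]) :
    hdet (M * !![(α : ℍ[ℝ]), x; star x, (β : ℍ[ℝ])] * Mᴴ) =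
      hdet (M * Mᴴ) * (α * β - normSq x) := by
  simp only [hdet, mul_apply, Fin.sum_univ_two, conjTranspose_apply, of_apply, cons_val',
    cons_val_zero, cons_val_one, empty_val', cons_val_fin_one]
  simp only [normSq_def', re_add, imI_add, imJ_add, imK_add, re_mul, imI_mul, imJ_mul, imK_mul,
    re_star, imI_star, imJ_star, imK_star, re_coe, imI_coe, imJ_coe, imK_coe]
  ring

theorem hdet_hermitian_conj (M X : Matrix (Fin 2) (Fin 2) (Quaternion ℝ))
    (hX : X.IsHermitian) :
    hdet (M * X * Mᴴ) = hdet (M * Mᴴ) * hdet X ∧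
    hdet (M * Mᴴ) =
      Quaternion.normSq (M 0 0) * Quaternion.normSq (M 1 1) +
        Quaternion.normSq (M 0 1) * Quaternion.normSq (M 1 0) -
        2 * (M 0 0 * star (M 1 0) * M 1 1 * star (M 0 1)).re := by
  refine ⟨?_, hdet_mul_conjTranspose M⟩
  rw [hX.eq_fin_two, hdet_mul_fin_two_mul_conjTranspose, hdet_fin_two]
end
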